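/- arXiv:2308.06295 — 2 statements merged into one kernel-verified Lean document; each statement's English description precedes it below -/
import Mathlib

section
/- Let τ > 1/e, let σ, c : [0, ϱ(τ)] → ℝ be measurable with 0 ≤ σ(t) ≤ τ and |c(t)| ≤ 1 for all t, and let y : [-τ, ϱ(τ)] → ℝ be continuous with 0 ≤ y(t) ≤ 1 for all t ∈ [-τ, ϱ(τ)], max y > 0, y(ϱ(τ)) = 0, and y(t) = y(0) - ∫_0^t c(s)·y(s - σ(s)) ds for all t ∈ [0, ϱ(τ)]. Then the function a(t) := x_τ(t) - y(t) is nonnegative and nonincreasing on [0, ϱ(τ)]; in particular y(t) ≤ x_τ(t) for all t ∈ [0, ϱ(τ)]. -/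
open Real MeasureTheory Filter Set

noncomputable section

/-- `x` is the solution of `x'(t) = -x(t-τ)` with `x ≡ 1` on `(-∞,0]`:
`x(t) = 1 - ∫_0^t x(s-τ) ds` for `t ≥ 0`. -/
def IsXSol (τ : ℝ) (x : ℝ → ℝ) : Prop :=
  Continuous x ∧ (∀ t ≤ (0:ℝ), x t = 1) ∧
    ∀ t ≥ (0:ℝ), x t = 1 - ∫ s in (0:ℝ)..t, x (s - τ)

/-- The first positive root of a function. -/
noncomputable def firstRoot (x : ℝ → ℝ) : ℝ := sInf {t : ℝ | 0 < t ∧ x t = 0}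

/-- `ψ` is the solution of `ψ'(t) = max{x_τ(ϱ(τ)+t-τ), ψ(t)}` on `[0,τ]`,
`ψ'(t) = ψ(t)` on `[τ,∞)`, `ψ(0) = 0`. -/
def IsPsiSol (τ ρ : ℝ) (xτ ψ : ℝ → ℝ) : Prop :=
  ContinuousOn ψ (Ici (0:ℝ)) ∧ ψ 0 = 0 ∧
    (∀ t ∈ Icc (0:ℝ) τ, ψ t = ∫ s in (0:ℝ)..t, max (xτ (ρ + s - τ)) (ψ s)) ∧
    (∀ t ≥ τ, ψ t = ψ τ + ∫ s in τ..t, ψ s)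

/-- A (continuous, integrated-form) solution of the delay equation
`x'(t) = p(t) x(τ̄(t))` on `[t₀,∞)`. -/
def IsDelaySolution (p τd : ℝ → ℝ) (t₀ : ℝ) (x : ℝ → ℝ) : Prop :=
  Continuous x ∧ ∀ t ≥ t₀, x t = x t₀ + ∫ s in t₀..t, p s * x (τd s)

/-- `x` is `α`-oscillating: eventually every interval on which `x` has no zero
has length at most `α`. -/
def AlphaOscillating (α : ℝ) (x : ℝ → ℝ) : Prop :=
  ∃ T : ℝ, ∀ a b : ℝ, T ≤ a → a < b → (∀ t ∈ Ioo a b, x t ≠ 0) → b - a ≤ α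

/-- `x` is oscillatory: it has arbitrarily large zeros. -/
def Oscillatory (x : ℝ → ℝ) : Prop := ∀ T : ℝ, ∃ t ≥ T, x t = 0

/-!
Write `ϱ = firstRoot x_τ`. On `(-∞, ϱ]` the solution `x_τ` takes values in `[0, 1]` and is
nonincreasing, and `y(r) = ∫_r^ϱ c(s) y(s - σ(s)) ds` for `r ∈ [0, ϱ]`. Say that `y` is dominated
by the shift `u` if `y(r) ≤ x_τ(r - u)` on `[-τ, ϱ]`; this holds for `u = ϱ` because `y ≤ 1`. If
it holds for some `u > 0`, integrating the bound `c(s) y(s - σ(s)) ≤ x_τ(s - u - τ)` from `r` to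
`ϱ` shows that it also holds for `u - min(x_τ(ϱ - u), u)`. The set of such `u ∈ [0, ϱ]` is closed,
so it contains its infimum, which must therefore be `0`: `y ≤ x_τ`. Then
`y' ≥ -y(t - σ) ≥ -x_τ(t - σ) ≥ -x_τ(t - τ) = x_τ'`, so `x_τ - y` is nonincreasing on `[0, ϱ]`.
-/

section FirstRoot

variable {f : ℝ → ℝ}

theorem firstRoot_nonneg (f : ℝ → ℝ) : 0 ≤ firstRoot f :=
  Real.sInf_nonneg fun _ ht => ht.1.le

theorem firstRoot_le {t : ℝ} (ht : 0 < t) (hft : f t = 0) : firstRoot f ≤ t :=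
  csInf_le ⟨0, fun _ hs => hs.1.le⟩ ⟨ht, hft⟩

theorem exists_zero_of_nonpos (hf : Continuous f) (h0 : 0 < f 0) {t : ℝ} (ht : 0 ≤ t)
    (hft : f t ≤ 0) : ∃ z ∈ Ioc 0 t, f z = 0 := by
  obtain ⟨z, hz, hfz⟩ := intermediate_value_Icc' ht hf.continuousOn ⟨hft, h0.le⟩
  refine ⟨z, ⟨lt_of_le_of_ne hz.1 ?_, hz.2⟩, hfz⟩
  rintro rfl
  linarith

theorem pos_of_lt_firstRoot (hf : Continuous f) (h0 : 0 < f 0) {t : ℝ} (ht : 0 ≤ t)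
    (htρ : t < firstRoot f) : 0 < f t := by
  by_contra! hft
  obtain ⟨z, hz, hfz⟩ := exists_zero_of_nonpos hf h0 ht hft
  exact (firstRoot_le hz.1 hfz).not_gt (hz.2.trans_lt htρ)

theorem nonneg_of_le_firstRoot (hf : Continuous f) (h0 : 0 < f 0) {t : ℝ} (ht : 0 ≤ t)
    (htρ : t ≤ firstRoot f) : 0 ≤ f t := by
  by_contra! hft
  obtain ⟨z, hz, hfz⟩ := exists_zero_of_nonpos hf h0 ht hft.le
  have hzt : z < t := lt_of_le_of_ne hz.2 (by rintro rfl; linarith)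
  exact (firstRoot_le hz.1 hfz).not_gt (hzt.trans_le htρ)

end FirstRoot

namespace IsXSol

variable {τ : ℝ} {x : ℝ → ℝ}

theorem intervalIntegrable_comp_sub (hx : IsXSol τ x) (a b : ℝ) :
    IntervalIntegrable (fun s => x (s - τ)) volume a b :=
  (hx.1.comp (continuous_sub_right τ)).intervalIntegrable a b

theorem sub_eq_integral (hx : IsXSol τ x) {a b : ℝ} (ha : 0 ≤ a) (hb : 0 ≤ b) :
    x a - x b = ∫ s in a..b, x (s - τ) := by
  rw [hx.2.2 a ha, hx.2.2 b hb, ← intervalIntegral.integral_add_adjacent_intervals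
    (hx.intervalIntegrable_comp_sub 0 a) (hx.intervalIntegrable_comp_sub a b)]
  ring

theorem apply_max_zero (hx : IsXSol τ x) (t : ℝ) : x (max t 0) = x t := by
  rcases le_total t 0 with h | h
  · rw [max_eq_right h, hx.2.1 t h, hx.2.1 0 le_rfl]
  · rw [max_eq_left h]

theorem apply_zero_pos (hx : IsXSol τ x) : 0 < x 0 := by
  rw [hx.2.1 0 le_rfl]
  exact one_pos

theorem nonneg (hx : IsXSol τ x) {t : ℝ} (ht : t ≤ firstRoot x) : 0 ≤ x t := by
  rw [← hx.apply_max_zero]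
  exact nonneg_of_le_firstRoot hx.1 hx.apply_zero_pos (le_max_right _ _)
    (max_le ht (firstRoot_nonneg x))

theorem pos (hx : IsXSol τ x) {t : ℝ} (ht : t < firstRoot x) : 0 < x t := by
  rcases le_or_gt t 0 with h | h
  · rw [hx.2.1 t h]
    exact one_pos
  · exact pos_of_lt_firstRoot hx.1 hx.apply_zero_pos h.le ht

theorem antitoneOn (hx : IsXSol τ x) (hτ : 0 ≤ τ) : AntitoneOn x (Iic (firstRoot x)) := by
  intro u _ v hv huv
  rw [← hx.apply_max_zero u, ← hx.apply_max_zero v, ← sub_nonneg,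
    hx.sub_eq_integral (le_max_right _ _) (le_max_right _ _)]
  refine intervalIntegral.integral_nonneg (max_le_max_right 0 huv) fun s hs => hx.nonneg ?_
  linarith [hs.2, max_le (show v ≤ firstRoot x from hv) (firstRoot_nonneg x)]

theorem le_one (hx : IsXSol τ x) (hτ : 0 ≤ τ) {t : ℝ} (ht : t ≤ firstRoot x) : x t ≤ 1 :=
  calc x t ≤ x (min t 0) :=
        hx.antitoneOn hτ ((min_le_left t 0).trans ht) ht (min_le_left _ _)
    _ = 1 := hx.2.1 _ (min_le_right _ _)

end IsXSol

theorem integrableOn_mul_comp_of_mapsTo {a b C M : ℝ} {K : Set ℝ} {c g y : ℝ → ℝ}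
    (hK : IsClosed K) (hcm : Measurable c) (hgm : Measurable g) (hg : MapsTo g (Icc a b) K)
    (hc : ∀ t ∈ Icc a b, |c t| ≤ C) (hy : ContinuousOn y K) (hyM : ∀ t ∈ K, |y t| ≤ M) :
    IntegrableOn (fun s => c s * y (g s)) (Icc a b) := by
  classical
  have hym : Measurable (K.piecewise y 0) :=
    hy.measurable_piecewise continuousOn_const hK.measurableSet
  have heq : EqOn (fun s => c s * K.piecewise y 0 (g s)) (fun s => c s * y (g s)) (Icc a b) :=
    fun s hs => by simp only [piecewise_eq_of_mem _ _ _ (hg hs)]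
  refine IntegrableOn.congr_fun ?_ heq measurableSet_Icc
  refine Measure.integrableOn_of_bounded (M := C * M) measure_Icc_lt_top.ne
    (hcm.mul (hym.comp hgm)).aestronglyMeasurable (ae_restrict_of_forall_mem measurableSet_Icc ?_)
  intro s hs
  simp only [piecewise_eq_of_mem _ _ _ (hg hs), norm_mul, Real.norm_eq_abs]
  exact mul_le_mul (hc s hs) (hyM _ (hg hs)) (abs_nonneg _) ((abs_nonneg _).trans (hc s hs))

theorem sub_eq_integral_of_eq_sub_integral {ρ : ℝ} {y f : ℝ → ℝ} (hf : IntegrableOn f (Icc 0 ρ))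
    (hy : ∀ t ∈ Icc 0 ρ, y t = y 0 - ∫ s in (0 : ℝ)..t, f s) {a b : ℝ} (ha : a ∈ Icc 0 ρ)
    (hb : b ∈ Icc 0 ρ) : y a - y b = ∫ s in a..b, f s := by
  have h0 : (0 : ℝ) ∈ Icc 0 ρ := ⟨le_rfl, ha.1.trans ha.2⟩
  rw [hy a ha, hy b hb, ← intervalIntegral.integral_add_adjacent_intervals
    (hf.mono_set (uIcc_subset_Icc h0 ha)).intervalIntegrable
    (hf.mono_set (uIcc_subset_Icc ha hb)).intervalIntegrable]
  ring

theorem zero_mem_of_forall_exists_lt {S : Set ℝ} (hS : IsClosed S) (hne : S.Nonempty)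
    (hS0 : S ⊆ Ici 0) (hstep : ∀ u ∈ S, 0 < u → ∃ v ∈ S, v < u) : (0 : ℝ) ∈ S := by
  have hbdd : BddBelow S := ⟨0, hS0⟩
  have hmem := hS.csInf_mem hne hbdd
  rcases (show 0 ≤ sInf S from hS0 hmem).eq_or_lt with h | h
  · rwa [← h] at hmem
  · obtain ⟨v, hv, hvlt⟩ := hstep _ hmem h
    exact absurd (csInf_le hbdd hv) hvlt.not_ge

theorem mapsTo_sub_Icc {τ ρ : ℝ} {σ : ℝ → ℝ} (hσ : ∀ t ∈ Icc (0 : ℝ) ρ, 0 ≤ σ t ∧ σ t ≤ τ) :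
    MapsTo (fun s => s - σ s) (Icc 0 ρ) (Icc (-τ) ρ) :=
  fun s hs => ⟨by linarith [hs.1, (hσ s hs).2], by linarith [hs.2, (hσ s hs).1]⟩

def DominatedByShift (x y : ℝ → ℝ) (τ ρ u : ℝ) : Prop :=
  ∀ r ∈ Icc (-τ) ρ, y r ≤ x (r - u)

theorem isClosed_setOf_dominatedByShift {x : ℝ → ℝ} (hx : Continuous x) (y : ℝ → ℝ) (τ ρ : ℝ) :
    IsClosed {u | DominatedByShift x y τ ρ u} := by
  simp only [DominatedByShift, ofPred_forall]
  exact isClosed_biInter fun r _ => isClosed_le continuous_const (hx.comp (continuous_sub_left r))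

theorem IsXSol.dominatedByShift_self {τ ρ : ℝ} {x y : ℝ → ℝ} (hx : IsXSol τ x)
    (hy1 : ∀ t ∈ Icc (-τ) ρ, y t ≤ 1) : DominatedByShift x y τ ρ ρ := fun r hr => by
  rw [hx.2.1 _ (by linarith [hr.2])]
  exact hy1 r hr

section Comparison

variable {τ ρ : ℝ} {x y σ c : ℝ → ℝ}

theorem mul_comp_sub_le_of_dominatedByShift (hxa : AntitoneOn x (Iic ρ))
    (hσ : ∀ t ∈ Icc (0 : ℝ) ρ, 0 ≤ σ t ∧ σ t ≤ τ) (hc : ∀ t ∈ Icc (0 : ℝ) ρ, |c t| ≤ 1)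
    (hy0 : ∀ t ∈ Icc (-τ) ρ, 0 ≤ y t) {u : ℝ} (hu : 0 ≤ u) (hdom : DominatedByShift x y τ ρ u)
    {s : ℝ} (hs : s ∈ Icc 0 ρ) : c s * y (s - σ s) ≤ x (s - u - τ) := by
  have hmem : s - σ s ∈ Icc (-τ) ρ := mapsTo_sub_Icc hσ hs
  calc c s * y (s - σ s) ≤ y (s - σ s) :=
        mul_le_of_le_one_left (hy0 _ hmem) ((le_abs_self _).trans (hc s hs))
    _ ≤ x (s - σ s - u) := hdom _ hmem
    _ ≤ x (s - u - τ) := hxa (by simp only [mem_Iic]; linarith [hmem.2, (hσ s hs).2])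
        (by simp only [mem_Iic]; linarith [hmem.2]) (by linarith [(hσ s hs).2])

theorem IsXSol.dominatedByShift_sub_min (hx : IsXSol τ x) (hτ : 0 ≤ τ) (hρ : ρ = firstRoot x)
    (hσ : ∀ t ∈ Icc (0 : ℝ) ρ, 0 ≤ σ t ∧ σ t ≤ τ) (hc : ∀ t ∈ Icc (0 : ℝ) ρ, |c t| ≤ 1)
    (hy01 : ∀ t ∈ Icc (-τ) ρ, 0 ≤ y t ∧ y t ≤ 1) (hyρ : y ρ = 0)
    (hyeq : ∀ t ∈ Icc (0 : ℝ) ρ, y t = y 0 - ∫ s in (0 : ℝ)..t, c s * y (s - σ s))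
    (hint : IntegrableOn (fun s => c s * y (s - σ s)) (Icc 0 ρ)) {u : ℝ} (hu : 0 < u)
    (huρ : u ≤ ρ) (hdom : DominatedByShift x y τ ρ u) :
    DominatedByShift x y τ ρ (u - min (x (ρ - u)) u) := by
  subst hρ
  set ρ := firstRoot x
  set δ := min (x (ρ - u)) u
  have hδx : δ ≤ x (ρ - u) := min_le_left _ _
  have hδu : δ ≤ u := min_le_right _ _
  have hδ : 0 < δ := lt_min (hx.pos (by linarith)) hu
  intro r hr
  rcases le_or_gt (r - (u - δ)) 0 with hθ | hθ
  · rw [hx.2.1 _ hθ]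
    exact (hy01 r hr).2
  have hr0 : r ∈ Icc 0 ρ := ⟨by linarith, hr.2⟩
  have hyr : y r ≤ ∫ s in (r - u)..(ρ - u), x (s - τ) := by
    have hyr_eq := sub_eq_integral_of_eq_sub_integral hint hyeq hr0 ⟨hr0.1.trans hr0.2, le_rfl⟩
    rw [hyρ, sub_zero] at hyr_eq
    calc y r = ∫ s in r..ρ, c s * y (s - σ s) := hyr_eq
      _ ≤ ∫ s in r..ρ, x (s - u - τ) :=
        intervalIntegral.integral_mono_on hr.2
          (hint.mono_set (uIcc_subset_Icc hr0 ⟨hr0.1.trans hr0.2, le_rfl⟩)).intervalIntegrable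
          ((hx.1.comp ((continuous_sub_right u).sub continuous_const)).intervalIntegrable _ _)
          fun s hs => mul_comp_sub_le_of_dominatedByShift (hx.antitoneOn hτ) hσ hc
            (fun t ht => (hy01 t ht).1) hu.le hdom ⟨hr0.1.trans hs.1, hs.2⟩
      _ = ∫ s in (r - u)..(ρ - u), x (s - τ) :=
        intervalIntegral.integral_comp_sub_right (fun s => x (s - τ)) u
  have hhead : ∫ s in (r - u)..(r - (u - δ)), x (s - τ) ≤ δ :=
    calc ∫ s in (r - u)..(r - (u - δ)), x (s - τ) ≤ ∫ _ in (r - u)..(r - (u - δ)), (1 : ℝ) :=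
          intervalIntegral.integral_mono_on (by linarith)
            (hx.intervalIntegrable_comp_sub _ _) intervalIntegrable_const
            fun s hs => hx.le_one hτ (by linarith [hs.2, hr.2])
      _ = δ := by simp only [intervalIntegral.integral_const, smul_eq_mul, mul_one]; ring
  have htail : ∫ s in (r - (u - δ))..(ρ - u), x (s - τ) = x (r - (u - δ)) - x (ρ - u) :=
    (hx.sub_eq_integral hθ.le (by linarith)).symm
  rw [← intervalIntegral.integral_add_adjacent_intervals (hx.intervalIntegrable_comp_sub _ _)
    (hx.intervalIntegrable_comp_sub _ _), htail] at hyr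
  linarith

theorem IsXSol.dominatedByShift_zero (hx : IsXSol τ x) (hτ : 0 ≤ τ) (hρ : ρ = firstRoot x)
    (hσ : ∀ t ∈ Icc (0 : ℝ) ρ, 0 ≤ σ t ∧ σ t ≤ τ) (hc : ∀ t ∈ Icc (0 : ℝ) ρ, |c t| ≤ 1)
    (hy01 : ∀ t ∈ Icc (-τ) ρ, 0 ≤ y t ∧ y t ≤ 1) (hyρ : y ρ = 0)
    (hyeq : ∀ t ∈ Icc (0 : ℝ) ρ, y t = y 0 - ∫ s in (0 : ℝ)..t, c s * y (s - σ s))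
    (hint : IntegrableOn (fun s => c s * y (s - σ s)) (Icc 0 ρ)) :
    DominatedByShift x y τ ρ 0 := by
  have hρ0 : 0 ≤ ρ := hρ ▸ firstRoot_nonneg x
  refine (zero_mem_of_forall_exists_lt (S := Icc 0 ρ ∩ {u | DominatedByShift x y τ ρ u})
    (isClosed_Icc.inter (isClosed_setOf_dominatedByShift hx.1 y τ ρ))
    ⟨ρ, ⟨hρ0, le_rfl⟩, hx.dominatedByShift_self fun t ht => (hy01 t ht).2⟩
    (fun u hu => hu.1.1) ?_).2
  rintro u ⟨hu, hdom⟩ hu0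
  have hδ : 0 < min (x (ρ - u)) u := lt_min (hx.pos (by linarith)) hu0
  refine ⟨u - min (x (ρ - u)) u, ⟨⟨by linarith [min_le_right (x (ρ - u)) u], by linarith [hu.2]⟩,
    hx.dominatedByShift_sub_min hτ hρ hσ hc hy01 hyρ hyeq hint hu0 hu.2 hdom⟩, by linarith⟩

theorem IsXSol.antitoneOn_sub (hx : IsXSol τ x) (hτ : 0 ≤ τ) (hρ : ρ = firstRoot x)
    (hσ : ∀ t ∈ Icc (0 : ℝ) ρ, 0 ≤ σ t ∧ σ t ≤ τ) (hc : ∀ t ∈ Icc (0 : ℝ) ρ, |c t| ≤ 1)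
    (hy0 : ∀ t ∈ Icc (-τ) ρ, 0 ≤ y t)
    (hyeq : ∀ t ∈ Icc (0 : ℝ) ρ, y t = y 0 - ∫ s in (0 : ℝ)..t, c s * y (s - σ s))
    (hint : IntegrableOn (fun s => c s * y (s - σ s)) (Icc 0 ρ))
    (hdom : DominatedByShift x y τ ρ 0) : AntitoneOn (fun t => x t - y t) (Icc 0 ρ) := by
  intro a ha b hb hab
  have hx_sub := hx.sub_eq_integral ha.1 hb.1
  have hy_sub := sub_eq_integral_of_eq_sub_integral hint hyeq ha hb
  have hle : ∫ s in a..b, c s * y (s - σ s) ≤ ∫ s in a..b, x (s - τ) :=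
    intervalIntegral.integral_mono_on hab (hint.mono_set (uIcc_subset_Icc ha hb)).intervalIntegrable
      (hx.intervalIntegrable_comp_sub a b) fun s hs => by
        simpa only [sub_zero] using mul_comp_sub_le_of_dominatedByShift (hρ ▸ hx.antitoneOn hτ)
          hσ hc hy0 le_rfl hdom ⟨ha.1.trans hs.1, hs.2.trans hb.2⟩
  simp only
  linarith

end Comparison

theorem stmt2_general (τ : ℝ) (hτ : 1 / Real.exp 1 < τ)
    (xτ : ℝ → ℝ) (hx : IsXSol τ xτ) (ρ : ℝ) (hρ : ρ = firstRoot xτ)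
    (σ c : ℝ → ℝ) (hσm : Measurable σ) (hcm : Measurable c)
    (hσ : ∀ t ∈ Icc (0:ℝ) ρ, 0 ≤ σ t ∧ σ t ≤ τ)
    (hc : ∀ t ∈ Icc (0:ℝ) ρ, |c t| ≤ 1)
    (y : ℝ → ℝ) (hy : ContinuousOn y (Icc (-τ) ρ))
    (hy01 : ∀ t ∈ Icc (-τ) ρ, 0 ≤ y t ∧ y t ≤ 1)
    (hyρ : y ρ = 0)
    (hyeq : ∀ t ∈ Icc (0:ℝ) ρ, y t = y 0 - ∫ s in (0:ℝ)..t, c s * y (s - σ s)) :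
    (∀ t ∈ Icc (0:ℝ) ρ, 0 ≤ xτ t - y t) ∧
    AntitoneOn (fun t => xτ t - y t) (Icc (0:ℝ) ρ) := by
  have hτ0 : 0 ≤ τ := (one_div_pos.2 (exp_pos 1)).le.trans hτ.le
  have hint : IntegrableOn (fun s => c s * y (s - σ s)) (Icc 0 ρ) :=
    integrableOn_mul_comp_of_mapsTo isClosed_Icc hcm (measurable_id.sub hσm)
      (mapsTo_sub_Icc hσ) hc hy
      fun t ht => abs_le.2 ⟨by linarith [(hy01 t ht).1], (hy01 t ht).2⟩
  have hdom := hx.dominatedByShift_zero hτ0 hρ hσ hc hy01 hyρ hyeq hint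
  refine ⟨fun t ht => sub_nonneg.2 ?_, hx.antitoneOn_sub hτ0 hρ hσ hc (fun t ht => (hy01 t ht).1)
    hyeq hint hdom⟩
  simpa only [sub_zero] using hdom t ⟨by linarith [ht.1], ht.2⟩

theorem stmt2 (τ : ℝ) (hτ : 1 / Real.exp 1 < τ)
    (xτ : ℝ → ℝ) (hx : IsXSol τ xτ) (ρ : ℝ) (hρ : ρ = firstRoot xτ)
    (σ c : ℝ → ℝ) (hσm : Measurable σ) (hcm : Measurable c)
    (hσ : ∀ t ∈ Icc (0:ℝ) ρ, 0 ≤ σ t ∧ σ t ≤ τ)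
    (hc : ∀ t ∈ Icc (0:ℝ) ρ, |c t| ≤ 1)
    (y : ℝ → ℝ) (hy : ContinuousOn y (Icc (-τ) ρ))
    (hy01 : ∀ t ∈ Icc (-τ) ρ, 0 ≤ y t ∧ y t ≤ 1)
    (hypos : ∃ t ∈ Icc (-τ) ρ, 0 < y t)
    (hyρ : y ρ = 0)
    (hyeq : ∀ t ∈ Icc (0:ℝ) ρ, y t = y 0 - ∫ s in (0:ℝ)..t, c s * y (s - σ s)) :
    (∀ t ∈ Icc (0:ℝ) ρ, 0 ≤ xτ t - y t) ∧
    AntitoneOn (fun t => xτ t - y t) (Icc (0:ℝ) ρ) :=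
  stmt2_general τ hτ xτ hx ρ hρ σ c hσm hcm hσ hc y hy hy01 hyρ hyeq
end
end

section
/- For each fixed τ ∈ (1/e, 2]: the function ψ_τ is strictly increasing on [0, ∞) and tends to +∞, and if τ ∈ (1/e, 1] then ψ_τ(τ) < 1. The function Θ(t) := ∫_0^t x_τ(ϱ(τ) + w - τ) dw - x_τ(ϱ(τ) + t - τ) is continuous and strictly increasing on [0, τ] with Θ(0)·Θ(τ) < 0, and hence has a unique root ξ_τ ∈ (0, τ), which satisfies ∫_0^{ξ_τ} x_τ(ϱ(τ) + w - τ) dw = x_τ(ϱ(τ) + ξ_τ - τ); moreover ψ_τ(t) = ∫_0^t x_τ(ϱ(τ) + w - τ) dw for t ∈ [0, ξ_τ] and ψ_τ(t) = ψ_τ(ξ_τ)·exp(t - ξ_τ) for t ≥ ξ_τ. -/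
open Real MeasureTheory Filter Set

noncomputable section

/-!
If `x_τ` had no positive root it would be positive and decreasing. Then `x_τ' = -x_τ(· - τ)`
gives `x_τ(t - τ) ≥ L x_τ(t) ⇒ x_τ(t - τ) ≥ e^{Lτ} x_τ(t) ≥ eτL x_τ(t)` one delay later, so the
ratio `x_τ(t - τ) / x_τ(t)` eventually exceeds `(eτ)ⁿ → ∞`, while integrating the equation over
two half delays bounds it by `4 / τ²`.

Hence `g(s) = x_τ(ϱ + s - τ)` decreases on `[0, τ]` from positive values to `g(τ) = 0`, and
`Θ = ∫₀ g - g` increases strictly from `Θ(0) < 0` to `Θ(τ) > 0`. While `Θ ≤ 0`, the defect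
`d = ψ_τ - ∫₀ g ≥ 0` satisfies `d' = max(0, d + Θ) ≤ d` and `d(0) = 0`, so `d = 0` by Grönwall.
Once `Θ ≥ 0` we have `ψ_τ ≥ ∫₀ g ≥ g`, so the maximum is `ψ_τ` itself and `ψ_τ' = ψ_τ`.
-/

lemma hasDerivWithinAt_integral_Icc {f : ℝ → ℝ} {a b t : ℝ} (hf : ContinuousOn f (Icc a b))
    (ht : t ∈ Icc a b) : HasDerivWithinAt (fun u => ∫ s in a..u, f s) (f t) (Icc a b) t := by
  have : Fact (t ∈ Icc a b) := ⟨ht⟩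
  exact intervalIntegral.integral_hasDerivWithinAt_right
    ((hf.mono (Icc_subset_Icc_right ht.2)).intervalIntegrable_of_Icc ht.1)
    (hf.stronglyMeasurableAtFilter_nhdsWithin measurableSet_Icc t) (hf t ht)

lemma eq_zero_of_abs_le_integral_abs {d : ℝ → ℝ} {a b : ℝ} (hd : ContinuousOn d (Icc a b))
    (h : ∀ t ∈ Icc a b, |d t| ≤ ∫ s in a..t, |d s|) : ∀ t ∈ Icc a b, d t = 0 := by
  have hF := fun t (ht : t ∈ Icc a b) => hasDerivWithinAt_integral_Icc hd.abs ht
  have hF0 : ∀ t ∈ Icc a b, (∫ s in a..t, |d s|) = 0 :=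
    eq_zero_of_abs_deriv_le_mul_abs_self_of_eq_zero_right (K := 1)
      (fun t ht => (hF t ht).continuousWithinAt)
      (fun t ht => (hF t (Ico_subset_Icc_self ht)).mono_of_mem_nhdsWithin
        (Icc_mem_nhdsGE_of_mem ht))
      intervalIntegral.integral_same
      (fun t ht => by
        rw [Real.norm_eq_abs, abs_abs, one_mul]
        exact (h t (Ico_subset_Icc_self ht)).trans (le_abs_self _))
  intro t ht
  exact abs_nonpos_iff.mp ((h t ht).trans (hF0 t ht).le)

lemma intervalIntegrable_of_continuousOn_Ici {f : ℝ → ℝ} {c a b : ℝ}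
    (hf : ContinuousOn f (Ici c)) (ha : c ≤ a) (hb : c ≤ b) : IntervalIntegrable f volume a b :=
  (hf.mono fun _ hs => (le_min ha hb).trans hs.1).intervalIntegrable

lemma eq_mul_exp_of_eq_add_integral {y : ℝ → ℝ} {a : ℝ} (hy : ContinuousOn y (Ici a))
    (h : ∀ t ≥ a, y t = y a + ∫ s in a..t, y s) : ∀ t ≥ a, y t = y a * exp (t - a) := by
  intro T hT
  set d : ℝ → ℝ := fun t => y t - y a * exp (t - a) with hd_def
  have hd : ContinuousOn d (Icc a T) := (hy.mono Icc_subset_Ici_self).sub (by fun_prop)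
  have hd_eq : ∀ t ∈ Icc a T, d t = ∫ s in a..t, d s := by
    intro t ht
    simp only [hd_def]
    rw [intervalIntegral.integral_sub (intervalIntegrable_of_continuousOn_Ici hy le_rfl ht.1)
      (by apply Continuous.intervalIntegrable; fun_prop), intervalIntegral.integral_const_mul,
      intervalIntegral.integral_comp_sub_right, integral_exp, h t ht.1, sub_self, exp_zero]
    ring
  have hd0 := eq_zero_of_abs_le_integral_abs hd fun t ht => by
    rw [hd_eq t ht]; exact intervalIntegral.abs_integral_le_integral_abs ht.1
  exact sub_eq_zero.mp (hd0 T ⟨hT, le_rfl⟩)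

lemma pos_of_pos_of_ne_zero_Ioc {x : ℝ → ℝ} {a t : ℝ} (hx : ContinuousOn x (Icc a t))
    (ha : 0 < x a) (hat : a ≤ t) (hne : ∀ s ∈ Ioc a t, x s ≠ 0) : 0 < x t := by
  by_contra! ht
  obtain ⟨s, hs, hxs⟩ := intermediate_value_Icc' hat hx ⟨ht, ha.le⟩
  exact hne s ⟨hs.1.lt_of_ne (by rintro rfl; exact ha.ne' hxs), hs.2⟩ hxs

lemma apply_firstRoot_eq_zero {x : ℝ → ℝ} (hx : Continuous x) (h0 : x 0 ≠ 0)
    (h : ∃ t, 0 < t ∧ x t = 0) : x (firstRoot x) = 0 := by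
  have hclosed : IsClosed {t : ℝ | 0 < t ∧ x t = 0} := by
    have : {t : ℝ | 0 < t ∧ x t = 0} = Ici 0 ∩ x ⁻¹' {0} := by
      ext t
      exact ⟨fun ht => ⟨ht.1.le, ht.2⟩,
        fun ht => ⟨ht.1.lt_of_ne (by rintro rfl; exact h0 ht.2), ht.2⟩⟩
    rw [this]
    exact isClosed_Ici.inter (isClosed_singleton.preimage hx)
  exact (hclosed.csInf_mem h ⟨0, fun _ ht => ht.1.le⟩).2

lemma pos_of_lt_firstRoot_s5 {x : ℝ → ℝ} (hx : Continuous x) (hnonpos : ∀ t ≤ 0, 0 < x t) {t : ℝ}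
    (ht : t < firstRoot x) : 0 < x t := by
  rcases le_or_gt t 0 with ht0 | ht0
  · exact hnonpos t ht0
  refine pos_of_pos_of_ne_zero_Ioc hx.continuousOn (hnonpos 0 le_rfl) ht0.le fun s hs hxs => ?_
  have : firstRoot x ≤ s := csInf_le ⟨0, fun _ hu => hu.1.le⟩ ⟨hs.1, hxs⟩
  linarith [hs.2]

namespace IsXSol

variable {τ : ℝ} {x : ℝ → ℝ}

lemma eq_sub_integral (hx : IsXSol τ x) {s t : ℝ} (hs : 0 ≤ s) (hst : s ≤ t) :
    x t = x s - ∫ u in s..t, x (u - τ) := by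
  have hc : Continuous fun u => x (u - τ) := hx.1.comp (continuous_sub_right τ)
  rw [hx.2.2 t (hs.trans hst), hx.2.2 s hs, ← intervalIntegral.integral_add_adjacent_intervals
    (hc.intervalIntegrable 0 s) (hc.intervalIntegrable s t)]
  ring

lemma hasDerivAt (hx : IsXSol τ x) {t : ℝ} (ht : 0 < t) : HasDerivAt x (-x (t - τ)) t := by
  have hc : Continuous fun u => x (u - τ) := hx.1.comp (continuous_sub_right τ)
  refine ((intervalIntegral.integral_hasDerivAt_right (hc.intervalIntegrable 0 t)
    (hc.stronglyMeasurableAtFilter _ _) hc.continuousAt).const_sub 1).congr_of_eventuallyEq ?_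
  filter_upwards [eventually_gt_nhds ht] with u hu
  exact hx.2.2 u hu.le

lemma antitoneOn_Iic (hx : IsXSol τ x) (hτ : 0 ≤ τ) {b : ℝ} (hnn : ∀ u ≤ b, 0 ≤ x u) :
    AntitoneOn x (Iic b) := by
  have key : ∀ s t, 0 ≤ s → s ≤ t → t ≤ b → x t ≤ x s := fun s t hs hst htb => by
    rw [hx.eq_sub_integral hs hst, sub_le_self_iff]
    exact intervalIntegral.integral_nonneg hst fun u hu => hnn _ (by linarith [hu.2])
  intro s _ t htb hst
  rcases le_or_gt t 0 with ht | ht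
  · rw [hx.2.1 t ht, hx.2.1 s (hst.trans ht)]
  rcases le_or_gt s 0 with hs | hs
  · rw [hx.2.1 s hs, ← hx.2.1 0 le_rfl]
    exact key 0 t le_rfl ht.le htb
  · exact key s t hs.le hst htb

lemma le_one_of_antitoneOn (hx : IsXSol τ x) {b t : ℝ} (hanti : AntitoneOn x (Iic b))
    (ht : t ≤ b) : x t ≤ 1 :=
  hx.2.1 _ (min_le_right t 0) ▸ hanti ((min_le_left t 0).trans ht) ht (min_le_left t 0)

lemma exp_mul_le_of_mul_le (hx : IsXSol τ x) (hτ : 0 ≤ τ) {L a : ℝ} (ha : 0 ≤ a)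
    (hL : ∀ u ≥ a, L * x u ≤ x (u - τ)) : ∀ u ≥ a + τ, exp (L * τ) * x u ≤ x (u - τ) := by
  have hanti : AntitoneOn (fun u => x u * exp (L * u)) (Ici a) := by
    refine antitoneOn_of_hasDerivWithinAt_nonpos (convex_Ici a)
      (f' := fun u => -x (u - τ) * exp (L * u) + x u * (exp (L * u) * (L * 1)))
      (hx.1.mul (by fun_prop)).continuousOn (fun u hu => ?_) (fun u hu => ?_)
    · rw [interior_Ici] at hu
      exact ((hx.hasDerivAt (ha.trans_lt hu)).mul
        ((hasDerivAt_id' u).const_mul L).exp).hasDerivWithinAt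
    · rw [interior_Ici] at hu
      nlinarith [exp_pos (L * u), hL u hu.le]
  intro u hu
  have hxu := hanti (show u - τ ∈ Ici a by simp only [mem_Ici]; linarith)
    (show u ∈ Ici a by simp only [mem_Ici]; linarith) (sub_le_self u hτ)
  have hsplit : exp (L * u) = exp (L * τ) * exp (L * (u - τ)) := by rw [← exp_add]; ring_nf
  simp only [hsplit] at hxu
  exact le_of_mul_le_mul_right (by linarith) (exp_pos (L * (u - τ)))

lemma pow_mul_le (hx : IsXSol τ x) (hτ : 0 ≤ τ) (hpos : ∀ t, 0 < x t) (n : ℕ) :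
    ∀ u ≥ n * τ, (exp 1 * τ) ^ n * x u ≤ x (u - τ) := by
  induction n with
  | zero =>
    intro u _
    rw [pow_zero, one_mul]
    exact hx.antitoneOn_Iic hτ (b := u) (fun t _ => (hpos t).le) (sub_le_self u hτ)
      (mem_Iic.2 le_rfl) (sub_le_self u hτ)
  | succ n ih =>
    intro u hu
    have hstep := hx.exp_mul_le_of_mul_le hτ (by positivity) ih u (by push_cast at hu; linarith)
    calc (exp 1 * τ) ^ (n + 1) * x u = exp 1 * ((exp 1 * τ) ^ n * τ) * x u := by ring
      _ ≤ exp ((exp 1 * τ) ^ n * τ) * x u :=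
        mul_le_mul_of_nonneg_right exp_one_mul_le_exp (hpos u).le
      _ ≤ x (u - τ) := hstep

lemma half_mul_le (hx : IsXSol τ x) (hτ : 0 ≤ τ) (hpos : ∀ t, 0 < x t) {v : ℝ} (hv : 0 ≤ v) :
    τ / 2 * x (v - τ / 2) ≤ x v := by
  have hanti := hx.antitoneOn_Iic hτ (b := v) fun t _ => (hpos t).le
  have hint : τ / 2 * x (v - τ / 2) ≤ ∫ s in v..v + τ / 2, x (s - τ) :=
    calc τ / 2 * x (v - τ / 2) = ∫ _ in v..v + τ / 2, x (v - τ / 2) := by simp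
      _ ≤ ∫ s in v..v + τ / 2, x (s - τ) :=
        intervalIntegral.integral_mono_on (by linarith) intervalIntegrable_const
          ((hx.1.comp (continuous_sub_right τ)).intervalIntegrable _ _) fun s hs =>
            hanti (by simp only [mem_Iic]; linarith [hs.2]) (by simp only [mem_Iic]; linarith)
              (by linarith [hs.2])
  linarith [hx.eq_sub_integral (t := v + τ / 2) hv (by linarith), hpos (v + τ / 2)]

lemma not_forall_pos (hx : IsXSol τ x) (hτ : 1 / exp 1 < τ) : ¬ ∀ t, 0 < x t := by
  intro hpos
  have hτ0 : 0 < τ := (one_div_pos.2 (exp_pos 1)).trans hτ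
  have hq : 1 < exp 1 * τ := by rwa [div_lt_iff₀' (exp_pos 1)] at hτ
  obtain ⟨n, hn⟩ := ((tendsto_pow_atTop_atTop_of_one_lt hq).eventually_gt_atTop (4 / τ ^ 2)).exists
  have hlt : 4 < τ ^ 2 * (exp 1 * τ) ^ n := by rwa [div_lt_iff₀' (by positivity)] at hn
  set u := (n + 1 : ℝ) * τ
  have hu : n * τ ≤ u - τ := by simp only [u]; linarith
  have hn_pos : (0 : ℝ) ≤ n * τ := by positivity
  have hle : τ ^ 2 * (exp 1 * τ) ^ n * x u ≤ 4 * x u :=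
    calc τ ^ 2 * (exp 1 * τ) ^ n * x u ≤ τ ^ 2 * x (u - τ) := by
          rw [mul_assoc]; gcongr; exact hx.pow_mul_le hτ0.le hpos n u (by linarith)
      _ = 4 * (τ / 2 * (τ / 2 * x (u - τ / 2 - τ / 2))) := by rw [sub_sub, add_halves]; ring
      _ ≤ 4 * (τ / 2 * x (u - τ / 2)) := by
          gcongr; exact hx.half_mul_le hτ0.le hpos (by linarith)
      _ ≤ 4 * x u := by gcongr; exact hx.half_mul_le hτ0.le hpos (by linarith)
  linarith [mul_lt_mul_of_pos_right hlt (hpos u)]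

lemma exists_pos_root (hx : IsXSol τ x) (hτ : 1 / exp 1 < τ) : ∃ t, 0 < t ∧ x t = 0 := by
  by_contra! h
  refine hx.not_forall_pos hτ fun t => ?_
  rcases le_or_gt t 0 with ht | ht
  · simp [hx.2.1 t ht]
  · exact pos_of_pos_of_ne_zero_Ioc hx.1.continuousOn (by simp [hx.2.1 0 le_rfl]) ht.le
      fun s hs => h s hs.1

lemma firstRoot_spec (hx : IsXSol τ x) (hτ : 1 / exp 1 < τ) :
    x (firstRoot x) = 0 ∧ (∀ t < firstRoot x, 0 < x t) ∧ AntitoneOn x (Iic (firstRoot x)) := by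
  have hτ0 : 0 < τ := (one_div_pos.2 (exp_pos 1)).trans hτ
  have hnonpos : ∀ t ≤ 0, 0 < x t := fun t ht => by simp [hx.2.1 t ht]
  have hroot := apply_firstRoot_eq_zero hx.1 (hnonpos 0 le_rfl).ne' (hx.exists_pos_root hτ)
  have hpos : ∀ t < firstRoot x, 0 < x t := fun t => pos_of_lt_firstRoot_s5 hx.1 hnonpos
  refine ⟨hroot, hpos, hx.antitoneOn_Iic hτ0.le fun u hu => ?_⟩
  rcases hu.lt_or_eq with hu | rfl
  exacts [(hpos u hu).le, hroot.ge]

end IsXSol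

section Profile

variable {g : ℝ → ℝ} {τ : ℝ}

lemma strictMonoOn_integral_Iic (hg : Continuous g) (hpos : ∀ s < τ, 0 < g s) (c : ℝ) :
    StrictMonoOn (fun t => ∫ s in c..t, g s) (Iic τ) := by
  intro a _ b hb hab
  rw [← sub_pos, intervalIntegral.integral_interval_sub_left (hg.intervalIntegrable _ _)
    (hg.intervalIntegrable _ _)]
  exact intervalIntegral.intervalIntegral_pos_of_pos_on (hg.intervalIntegrable _ _)
    (fun s hs => hpos s (hs.2.trans_le hb)) hab

lemma strictMonoOn_integral_sub (hg : Continuous g) (hpos : ∀ s < τ, 0 < g s)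
    (hanti : AntitoneOn g (Iic τ)) :
    StrictMonoOn (fun t => (∫ s in (0 : ℝ)..t, g s) - g t) (Iic τ) := by
  simpa only [sub_eq_add_neg] using (strictMonoOn_integral_Iic hg hpos 0).add_monotone hanti.neg

end Profile

namespace IsPsiSol

variable {τ ρ ξ : ℝ} {x ψ : ℝ → ℝ}

lemma continuousOn_max (hψ : IsPsiSol τ ρ x ψ) (hx : Continuous x) :
    ContinuousOn (fun s => max (x (ρ + s - τ)) (ψ s)) (Ici 0) :=
  ContinuousOn.sup (by fun_prop) hψ.1

lemma integral_le (hψ : IsPsiSol τ ρ x ψ) (hx : Continuous x) {t : ℝ} (ht : t ∈ Icc 0 τ) :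
    ∫ s in (0 : ℝ)..t, x (ρ + s - τ) ≤ ψ t := by
  rw [hψ.2.2.1 t ht]
  exact intervalIntegral.integral_mono_on ht.1 ((hx.comp (by fun_prop)).intervalIntegrable _ _)
    (intervalIntegrable_of_continuousOn_Ici (hψ.continuousOn_max hx) le_rfl ht.1)
    fun s _ => le_max_left _ _

lemma eq_integral_of_le (hψ : IsPsiSol τ ρ x ψ) (hx : Continuous x) (hξ : ξ ≤ τ)
    (hle : ∀ s ∈ Icc 0 ξ, ∫ w in (0 : ℝ)..s, x (ρ + w - τ) ≤ x (ρ + s - τ)) :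
    ∀ t ∈ Icc 0 ξ, ψ t = ∫ w in (0 : ℝ)..t, x (ρ + w - τ) := by
  have hg : Continuous fun s => x (ρ + s - τ) := hx.comp (by fun_prop)
  set d : ℝ → ℝ := fun t => ψ t - ∫ w in (0 : ℝ)..t, x (ρ + w - τ) with hd_def
  have hd : ContinuousOn d (Icc 0 ξ) :=
    (hψ.1.mono Icc_subset_Ici_self).sub (Continuous.continuousOn (by fun_prop))
  have hd_eq : ∀ t ∈ Icc 0 ξ,
      d t = ∫ s in (0 : ℝ)..t, (max (x (ρ + s - τ)) (ψ s) - x (ρ + s - τ)) := fun t ht => by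
    simp only [hd_def]
    rw [hψ.2.2.1 t ⟨ht.1, ht.2.trans hξ⟩, intervalIntegral.integral_sub
      (intervalIntegrable_of_continuousOn_Ici (hψ.continuousOn_max hx) le_rfl ht.1)
      (hg.intervalIntegrable _ _)]
  have hbound : ∀ s ∈ Icc 0 ξ, 0 ≤ max (x (ρ + s - τ)) (ψ s) - x (ρ + s - τ) ∧
      max (x (ρ + s - τ)) (ψ s) - x (ρ + s - τ) ≤ |d s| := fun s hs => by
    have hds : d s = ψ s - ∫ w in (0 : ℝ)..s, x (ρ + w - τ) := rfl
    refine ⟨sub_nonneg.2 (le_max_left _ _), sub_le_iff_le_add.2 (max_le ?_ ?_)⟩ <;>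
      linarith [abs_nonneg (d s), le_abs_self (d s), hle s hs]
  intro t ht
  refine sub_eq_zero.1 (eq_zero_of_abs_le_integral_abs hd (fun t ht => ?_) t ht)
  rw [hd_eq t ht, abs_of_nonneg (intervalIntegral.integral_nonneg ht.1
    fun s hs => (hbound s ⟨hs.1, hs.2.trans ht.2⟩).1)]
  exact intervalIntegral.integral_mono_on ht.1
    (intervalIntegrable_of_continuousOn_Ici ((hψ.continuousOn_max hx).sub hg.continuousOn)
      le_rfl ht.1)
    ((hd.abs.mono (Icc_subset_Icc_right ht.2)).intervalIntegrable_of_Icc ht.1)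
    fun s hs => (hbound s ⟨hs.1, hs.2.trans ht.2⟩).2

lemma eq_add_integral_of_ge (hψ : IsPsiSol τ ρ x ψ) (hx : Continuous x) (hξ0 : 0 ≤ ξ)
    (hξ : ξ ≤ τ) (hge : ∀ s ∈ Icc ξ τ, x (ρ + s - τ) ≤ ∫ w in (0 : ℝ)..s, x (ρ + w - τ)) :
    ∀ t ≥ ξ, ψ t = ψ ξ + ∫ s in ξ..t, ψ s := by
  have hmax : ∀ a b : ℝ, 0 ≤ a → 0 ≤ b →
      IntervalIntegrable (fun s => max (x (ρ + s - τ)) (ψ s)) volume a b :=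
    fun _ _ => intervalIntegrable_of_continuousOn_Ici (hψ.continuousOn_max hx)
  have hψi : ∀ a b : ℝ, 0 ≤ a → 0 ≤ b → IntervalIntegrable ψ volume a b :=
    fun _ _ => intervalIntegrable_of_continuousOn_Ici hψ.1
  have hle : ∀ t ∈ Icc ξ τ, ψ t = ψ ξ + ∫ s in ξ..t, ψ s := by
    intro t ht
    rw [hψ.2.2.1 t ⟨hξ0.trans ht.1, ht.2⟩, hψ.2.2.1 ξ ⟨hξ0, hξ⟩,
      ← intervalIntegral.integral_add_adjacent_intervals (hmax _ _ le_rfl hξ0)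
        (hmax _ _ hξ0 (hξ0.trans ht.1))]
    congr 1
    refine intervalIntegral.integral_congr fun s hs => ?_
    rw [uIcc_of_le ht.1] at hs
    exact max_eq_right ((hge s ⟨hs.1, hs.2.trans ht.2⟩).trans
      (hψ.integral_le hx ⟨hξ0.trans hs.1, hs.2.trans ht.2⟩))
  intro t ht
  rcases le_total t τ with htτ | hτt
  · exact hle t ⟨ht, htτ⟩
  · rw [hψ.2.2.2 t hτt, hle τ ⟨hξ, le_rfl⟩, add_assoc,
      intervalIntegral.integral_add_adjacent_intervals (hψi _ _ hξ0 (hξ0.trans hξ))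
        (hψi _ _ (hξ0.trans hξ) (hξ0.trans (hξ.trans hτt)))]

lemma eq_integral_and_eq_mul_exp (hψ : IsPsiSol τ ρ x ψ) (hx : Continuous x)
    (hξ : ξ ∈ Icc 0 τ)
    (hmono : MonotoneOn (fun t => (∫ w in (0 : ℝ)..t, x (ρ + w - τ)) - x (ρ + t - τ)) (Icc 0 τ))
    (hroot : (∫ w in (0 : ℝ)..ξ, x (ρ + w - τ)) - x (ρ + ξ - τ) = 0) :
    (∀ t ∈ Icc 0 ξ, ψ t = ∫ w in (0 : ℝ)..t, x (ρ + w - τ)) ∧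
      ∀ t ≥ ξ, ψ t = ψ ξ * exp (t - ξ) := by
  refine ⟨hψ.eq_integral_of_le hx hξ.2 fun s hs => ?_,
    eq_mul_exp_of_eq_add_integral (hψ.1.mono (Ici_subset_Ici.2 hξ.1))
      (hψ.eq_add_integral_of_ge hx hξ.1 hξ.2 fun s hs => ?_)⟩
  · have := hmono ⟨hs.1, hs.2.trans hξ.2⟩ hξ hs.2
    simp only at this
    linarith
  · have := hmono hξ ⟨hξ.1.trans hs.1, hs.2⟩ hs.1
    simp only at this
    linarith

end IsPsiSol

section ExponentialTail

variable {f : ℝ → ℝ} {ξ : ℝ}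

lemma strictMonoOn_Ici_of_eq_mul_exp {a : ℝ} (haξ : a ≤ ξ) (hf : StrictMonoOn f (Icc a ξ))
    (hpos : 0 < f ξ) (hexp : ∀ t ≥ ξ, f t = f ξ * exp (t - ξ)) : StrictMonoOn f (Ici a) := by
  rw [← Icc_union_Ici_eq_Ici haξ]
  refine hf.union (fun s hs t ht hst => ?_) (isGreatest_Icc haξ) isLeast_Ici
  rw [hexp s hs, hexp t ht]
  exact mul_lt_mul_of_pos_left (exp_lt_exp.2 (by linarith)) hpos

lemma tendsto_atTop_of_eq_mul_exp (hpos : 0 < f ξ) (hexp : ∀ t ≥ ξ, f t = f ξ * exp (t - ξ)) :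
    Tendsto f atTop atTop := by
  refine Tendsto.congr' ?_ ((tendsto_exp_atTop.comp
    (tendsto_atTop_add_const_right _ (-ξ) tendsto_id)).const_mul_atTop hpos)
  filter_upwards [eventually_ge_atTop ξ] with t ht
  rw [hexp t ht, Function.comp_apply, id, sub_eq_add_neg]

lemma lt_one_of_eq_mul_exp {τ : ℝ} (hξ : ξ ∈ Ioo 0 τ) (hτ : τ ≤ 1) (hfξ : f ξ ≤ ξ)
    (hexp : ∀ t ≥ ξ, f t = f ξ * exp (t - ξ)) : f τ < 1 := by
  have hlt : ξ < exp (ξ - 1) := by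
    linarith [add_one_lt_exp (sub_ne_zero.2 (hξ.2.trans_le hτ).ne)]
  calc f τ = f ξ * exp (τ - ξ) := hexp τ hξ.2.le
    _ ≤ ξ * exp (τ - ξ) := by gcongr
    _ ≤ ξ * exp (1 - ξ) := by gcongr; exact hξ.1.le
    _ < exp (ξ - 1) * exp (1 - ξ) := by gcongr
    _ = 1 := by rw [← exp_add, sub_add_sub_cancel', sub_self, exp_zero]

end ExponentialTail

theorem stmt5 (τ : ℝ) (hτ : τ ∈ Ioc (1 / Real.exp 1) 2)
    (xτ : ℝ → ℝ) (hx : IsXSol τ xτ) (ρ : ℝ) (hρ : ρ = firstRoot xτ)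
    (ψ : ℝ → ℝ) (hψ : IsPsiSol τ ρ xτ ψ)
    (Θ : ℝ → ℝ)
    (hΘ : ∀ t, Θ t = (∫ w in (0:ℝ)..t, xτ (ρ + w - τ)) - xτ (ρ + t - τ)) :
    StrictMonoOn ψ (Ici (0:ℝ)) ∧
    Filter.Tendsto ψ Filter.atTop Filter.atTop ∧
    (τ ≤ 1 → ψ τ < 1) ∧
    ContinuousOn Θ (Icc (0:ℝ) τ) ∧
    StrictMonoOn Θ (Icc (0:ℝ) τ) ∧
    Θ 0 * Θ τ < 0 ∧
    ∃ ξ ∈ Ioo (0:ℝ) τ, Θ ξ = 0 ∧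
      (∀ t ∈ Ioo (0:ℝ) τ, Θ t = 0 → t = ξ) ∧
      (∫ w in (0:ℝ)..ξ, xτ (ρ + w - τ)) = xτ (ρ + ξ - τ) ∧
      (∀ t ∈ Icc (0:ℝ) ξ, ψ t = ∫ w in (0:ℝ)..t, xτ (ρ + w - τ)) ∧
      (∀ t ≥ ξ, ψ t = ψ ξ * Real.exp (t - ξ)) := by
  obtain ⟨hτ1, -⟩ := hτ
  have hτ0 : 0 < τ := (one_div_pos.2 (exp_pos 1)).trans hτ1
  obtain ⟨hxρ, hxpos, hxanti⟩ := hρ ▸ hx.firstRoot_spec hτ1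
  set g : ℝ → ℝ := fun s => xτ (ρ + s - τ)
  have hg : Continuous g := hx.1.comp (by fun_prop)
  have hgpos : ∀ s < τ, 0 < g s := fun s hs => hxpos _ (by linarith)
  have hganti : AntitoneOn g (Iic τ) := fun a ha b hb hab => hxanti
    (show ρ + a - τ ≤ ρ by linarith [mem_Iic.1 ha]) (show ρ + b - τ ≤ ρ by linarith [mem_Iic.1 hb])
    (by linarith)
  have hG := strictMonoOn_integral_Iic hg hgpos 0
  obtain rfl : Θ = fun t => (∫ s in (0 : ℝ)..t, g s) - g t := funext hΘ
  have hΘmono := (strictMonoOn_integral_sub hg hgpos hganti).mono (Icc_subset_Iic_self (a := 0))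
  have hΘ0 : (∫ s in (0 : ℝ)..0, g s) - g 0 < 0 := by simpa using hgpos 0 hτ0
  have hΘτ : 0 < (∫ s in (0 : ℝ)..τ, g s) - g τ := by
    simpa [g, hxρ] using hG (mem_Iic.2 hτ0.le) (mem_Iic.2 le_rfl) hτ0
  have hΘc : ContinuousOn (fun t => (∫ s in (0 : ℝ)..t, g s) - g t) (Icc 0 τ) := by fun_prop
  obtain ⟨ξ, hξ, hΘξ⟩ := intermediate_value_Ioo hτ0.le hΘc ⟨hΘ0, hΘτ⟩
  have hξI := Ioo_subset_Icc_self hξ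
  obtain ⟨hψG, hψexp⟩ := hψ.eq_integral_and_eq_mul_exp hx.1 hξI hΘmono.monotoneOn hΘξ
  have hψξ : 0 < ψ ξ := by
    simpa [hψG ξ ⟨hξI.1, le_rfl⟩] using hG (mem_Iic.2 hτ0.le) (mem_Iic.2 hξI.2) hξ.1
  have hGξ : ∫ s in (0 : ℝ)..ξ, g s ≤ ξ := by
    simpa using intervalIntegral.integral_mono_on (μ := volume) hξI.1 (hg.intervalIntegrable _ _)
      intervalIntegrable_const fun s hs =>
        hx.le_one_of_antitoneOn hxanti (show ρ + s - τ ≤ ρ by linarith [hs.2, hξI.2])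
  exact ⟨strictMonoOn_Ici_of_eq_mul_exp hξI.1 ((hG.mono fun t ht => ht.2.trans hξI.2).congr
      fun t ht => (hψG t ht).symm) hψξ hψexp, tendsto_atTop_of_eq_mul_exp hψξ hψexp,
    fun hτ1 => lt_one_of_eq_mul_exp hξ hτ1 (hψG ξ ⟨hξI.1, le_rfl⟩ ▸ hGξ) hψexp,
    hΘc, hΘmono, mul_neg_of_neg_of_pos hΘ0 hΘτ, ξ, hξ, hΘξ,
    fun t ht h0 => hΘmono.injOn (Ioo_subset_Icc_self ht) hξI (h0.trans hΘξ.symm),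
    sub_eq_zero.1 hΘξ, hψG, hψexp⟩
end
end
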